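/- The DNLS soliton profile q₀(x,θ) = √(2 sin(2θ)) · cosh³(x − iθ)/|cosh(x − iθ)|⁴ · e^{−ix cot(2θ)} satisfies ‖q₀(·,θ)‖_{L²}² = 8θ for every θ ∈ (0, π/2). -/

import Mathlib

open Complex MeasureTheory

/-!
Since `|cosh (x - iθ)|² = sinh² x + cos² θ` and the phase factor has modulus one,
`|q₀(x,θ)|² = 2 sin 2θ / (sinh² x + cos² θ)`. The substitution `t = tanh x` turns this into
`2 sin 2θ dt / (cos² θ + sin² θ t²)` on `(-1, 1)`, so `4 arctan (tan θ · tanh x)` is an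
antiderivative, and it runs from `-4θ` to `4θ`.
-/

/-- The DNLS soliton profile
`q₀(x,θ) = √(2 sin 2θ) · cosh³(x−iθ)/|cosh(x−iθ)|⁴ · e^{−ix cot 2θ}`. -/
noncomputable def solitonProfile (θ x : ℝ) : ℂ :=
  (Real.sqrt (2 * Real.sin (2 * θ)) : ℂ) *
    (Complex.cosh ((x : ℂ) - I * (θ : ℂ))) ^ 3 / (‖Complex.cosh ((x : ℂ) - I * (θ : ℂ))‖ : ℂ) ^ 4 *
    Complex.exp (-I * (x : ℂ) * ((Real.cos (2 * θ) / Real.sin (2 * θ) : ℝ) : ℂ))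

namespace Real

open Filter Topology

theorem hasDerivAt_tanh (x : ℝ) : HasDerivAt tanh (1 / cosh x ^ 2) x := by
  have h := (hasDerivAt_sinh x).div (hasDerivAt_cosh x) (cosh_pos x).ne'
  rw [show cosh x * cosh x - sinh x * sinh x = 1 by linear_combination cosh_sq x] at h
  rwa [show tanh = fun y => sinh y / cosh y from funext tanh_eq_sinh_div_cosh]

theorem tendsto_tanh_atTop : Tendsto tanh atTop (𝓝 1) := by
  have h : ∀ x, tanh x = 1 - 2 / (exp (2 * x) + 1) := fun x => by
    rw [tanh_eq, exp_neg, two_mul, exp_add]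
    field_simp
    ring
  rw [show tanh = fun x => 1 - 2 / (exp (2 * x) + 1) from funext h]
  have hden : Tendsto (fun x : ℝ => exp (2 * x) + 1) atTop atTop :=
    tendsto_atTop_add_const_right _ _ (tendsto_exp_atTop.comp (tendsto_id.const_mul_atTop two_pos))
  simpa using tendsto_const_nhds.sub (tendsto_const_nhds.div_atTop hden)

theorem hasDerivAt_arctan_mul_tanh (a x : ℝ) :
    HasDerivAt (fun y => arctan (a * tanh y)) (a / (cosh x ^ 2 + a ^ 2 * sinh x ^ 2)) x := by
  refine ((hasDerivAt_arctan _).comp x ((hasDerivAt_tanh x).const_mul a)).congr_deriv ?_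
  have hcosh := (cosh_pos x).ne'
  rw [tanh_eq_sinh_div_cosh]
  field_simp

theorem hasDerivAt_arctan_tan_mul_tanh {θ : ℝ} (hθ : cos θ ≠ 0) (x : ℝ) :
    HasDerivAt (fun y => arctan (tan θ * tanh y))
      (sin θ * cos θ / (sinh x ^ 2 + cos θ ^ 2)) x := by
  convert hasDerivAt_arctan_mul_tanh (tan θ) x using 1
  have hD : sinh x ^ 2 + cos θ ^ 2 ≠ 0 := by positivity
  rw [tan_eq_sin_div_cos]
  field_simp
  linear_combination sin θ * (cos θ ^ 2 * cosh_sq x + sinh x ^ 2 * sin_sq_add_cos_sq θ)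

theorem tendsto_arctan_tan_mul_tanh_atTop {θ : ℝ} (hθ : θ ∈ Set.Ioo (-(π / 2)) (π / 2)) :
    Tendsto (fun y => arctan (tan θ * tanh y)) atTop (𝓝 θ) := by
  have h := (continuous_arctan.tendsto _).comp (tendsto_tanh_atTop.const_mul (tan θ))
  rwa [mul_one, arctan_tan hθ.1 hθ.2] at h

end Real

theorem Complex.norm_cosh_add_mul_I_sq (x y : ℝ) :
    ‖cosh (x + y * I)‖ ^ 2 = Real.sinh x ^ 2 + Real.cos y ^ 2 := by
  have h : cosh (x + y * I) =
      ((Real.cosh x * Real.cos y : ℝ) : ℂ) + ((Real.sinh x * Real.sin y : ℝ) : ℂ) * I := by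
    push_cast
    rw [cosh_add, cosh_mul_I, sinh_mul_I]
    ring
  rw [Complex.sq_norm, h, normSq_add_mul_I]
  linear_combination Real.cos y ^ 2 * Real.cosh_sq x + Real.sinh x ^ 2 * Real.sin_sq_add_cos_sq y

theorem norm_solitonProfile_sq {θ : ℝ} (hθ : 0 ≤ Real.sin (2 * θ)) (x : ℝ) :
    ‖solitonProfile θ x‖ ^ 2 = 2 * Real.sin (2 * θ) / (Real.sinh x ^ 2 + Real.cos θ ^ 2) := by
  have hcosh : ‖cosh ((x : ℂ) - I * θ)‖ ^ 2 = Real.sinh x ^ 2 + Real.cos θ ^ 2 := by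
    simpa [sub_eq_add_neg, mul_comm I] using norm_cosh_add_mul_I_sq x (-θ)
  have hphase (r : ℝ) : ‖exp (-I * x * r)‖ = 1 := by
    rw [show -I * x * r = ((-(x * r) : ℝ) : ℂ) * I by push_cast; ring]
    exact norm_exp_ofReal_mul_I _
  rw [← hcosh]
  simp only [solitonProfile, norm_mul, norm_div, norm_pow, hphase, norm_real, Real.norm_eq_abs,
    abs_norm, abs_of_nonneg (Real.sqrt_nonneg _), mul_one]
  rw [div_pow, mul_pow, Real.sq_sqrt (by positivity)]
  rcases eq_or_ne ‖cosh ((x : ℂ) - I * θ)‖ 0 with h | h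
  · simp [h]
  · field_simp

/-- The DNLS soliton profile satisfies `‖q₀(·,θ)‖_{L²}² = 8θ` for `θ ∈ (0, π/2)`. -/
theorem soliton_L2_norm (θ : ℝ) (hθ : θ ∈ Set.Ioo 0 (Real.pi / 2)) :
    (∫ x : ℝ, ‖solitonProfile θ x‖ ^ 2) = 8 * θ := by
  obtain ⟨hθ₀, hθ₁⟩ := hθ
  have hsin : 0 < Real.sin (2 * θ) := Real.sin_pos_of_pos_of_lt_pi (by linarith) (by linarith)
  have hcos : Real.cos θ ≠ 0 := (Real.cos_pos_of_mem_Ioo ⟨by linarith, hθ₁⟩).ne'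
  set g : ℝ → ℝ := fun x => 2 * Real.sin (2 * θ) / (Real.sinh x ^ 2 + Real.cos θ ^ 2)
  have hg (x : ℝ) : HasDerivAt (fun y => 4 * Real.arctan (Real.tan θ * Real.tanh y)) (g x) x := by
    refine ((Real.hasDerivAt_arctan_tan_mul_tanh hcos x).const_mul 4).congr_deriv ?_
    simp only [g, Real.sin_two_mul]
    ring
  calc (∫ x : ℝ, ‖solitonProfile θ x‖ ^ 2) = ∫ x : ℝ, g |x| := by
        simp_rw [norm_solitonProfile_sq hsin.le, g, ← Real.abs_sinh, sq_abs]
    _ = 2 * ∫ x in Set.Ioi 0, g x := integral_comp_abs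
    _ = 2 * (4 * θ - 4 * Real.arctan (Real.tan θ * Real.tanh 0)) := by
        rw [integral_Ioi_of_hasDerivAt_of_nonneg' (fun x _ => hg x) (fun x _ => by positivity)
          ((Real.tendsto_arctan_tan_mul_tanh_atTop ⟨by linarith, hθ₁⟩).const_mul 4)]
    _ = 8 * θ := by simp only [Real.tanh_zero, mul_zero, Real.arctan_zero, sub_zero]; ring
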